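/- Suppose that every element of M with a right inverse is a unit and every element of M with a left inverse is a unit, and that Kl(T_M) has countable powers of 1. Then: (i) M is left-cancellative up to invertibles on the left; (ii) M is right-coprime-cancellative; and (iii) every family w : I → M indexed by a nonempty countable set I has a left-gcd, and this left-gcd is unique up to invertibles on the right (any two left-gcds δ, δ' of the family satisfy δ' = δ * χ for some unit χ of M). -/

import Mathlib

/-- Kleisli composition for the monad `T_M X = Option (M × X)`. -/
def KlComp {M : Type} [Monoid M] {X Y Z : Type}
    (g : Y → Option (M × Z)) (f : X → Option (M × Y)) : X → Option (M × Z) :=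
  fun x => (f x).bind fun p => (g p.2).map fun q => (p.1 * q.1, q.2)

/-- The Kleisli identity on `X`. -/
def KlId (M : Type) [Monoid M] (X : Type) : X → Option (M × X) :=
  fun x => some (1, x)

/-- A Kleisli morphism is an isomorphism when it has a two-sided inverse. -/
def IsKlIso {M : Type} [Monoid M] {X Y : Type} (f : X → Option (M × Y)) : Prop :=
  ∃ g : Y → Option (M × X), KlComp g f = KlId M X ∧ KlComp f g = KlId M Y

/-- The class `Surj` of Kleisli morphisms. -/
def KlSurj {M X Y : Type} (f : X → Option (M × Y)) : Prop :=
  ∀ y : Y, ∃ (x : X) (υ : M), f x = some (υ, y)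

/-- The class `Inj` of Kleisli morphisms. -/
def KlInj {M X Y : Type} (f : X → Option (M × Y)) : Prop :=
  ∀ (x x' : X) (υ υ' : M) (y : Y), f x = some (υ, y) → f x' = some (υ', y) → x = x'

/-- The class `Tot` of Kleisli morphisms. -/
def KlTot {M X Y : Type} (f : X → Option (M × Y)) : Prop :=
  ∀ x : X, f x ≠ none

/-- The class `Inv` of Kleisli morphisms. -/
def KlInv {M : Type} [Monoid M] {X Y : Type} (f : X → Option (M × Y)) : Prop :=
  ∀ (x : X) (υ : M) (y : Y), f x = some (υ, y) → IsUnit υ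
/-- `Kl(T_M)` has countable powers of `1`. -/
def HasCountablePowersOfOne (M : Type) [Monoid M] : Prop :=
  ∃ (P : Type) (π : ℕ → P → Option (M × PUnit)),
    ∀ (X : Type) (f : ℕ → X → Option (M × PUnit)),
      ∃! h : X → Option (M × P), ∀ n, KlComp (π n) h = f n
/-- `u` left-divides the family `w`. -/
def LeftDividesFam {M I : Type} [Monoid M] (u : M) (w : I → M) : Prop :=
  ∃ v : I → M, ∀ i, u * v i = w i

/-- `δ` is a left-gcd of the family `w`. -/
def IsLeftGcd {M I : Type} [Monoid M] (δ : M) (w : I → M) : Prop :=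
  LeftDividesFam δ w ∧ ∀ d : M, LeftDividesFam d w → ∃ c : M, d * c = δ

/-- The family `w` is left-coprime: every left-divisor has a right inverse. -/
def LeftCoprimeFam {M I : Type} [Monoid M] (w : I → M) : Prop :=
  ∀ d : M, LeftDividesFam d w → ∃ y : M, d * y = 1

/-- `M` is left-cancellative up to invertibles on the left. -/
def LeftCancellativeUpToInv (M : Type) [Monoid M] : Prop :=
  ∀ (I : Type) [Countable I] [Nonempty I] (w : M) (u v : I → M),
    (∀ i, w * u i = w * v i) → ∃ x : Mˣ, ∀ i, u i = ↑x * v i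

/-- `M` is right-coprime-cancellative. -/
def RightCoprimeCancellative (M : Type) [Monoid M] : Prop :=
  ∀ (I : Type) [Countable I] [Nonempty I] (u v : M) (w : I → M),
    LeftCoprimeFam w → (∀ i, u * w i = v * w i) → u = v

/-!
A Kleisli morphism `1 → P` is a pair `(c, p)` (or `none`), and its components are
`g n = c * t n` where `π n p = some (t n, ∗)`. So the universal property of the power says that every
sequence `g : ℕ → M` factors as `g = c * t` through the coordinates `t` of a point `p : P`, and
that `c` and `p` are unique. For a family `w` indexed by `I = e(ℕ)`, the factor `c` of `w ∘ e` is a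
left-gcd: any left-divisor `d'` with cofactors `v` yields the factorization `d' * ε` of `w ∘ e` from
that `ε` of `v ∘ e`. Uniqueness of `c` also turns `u * w = v * w` into `u * c = v * c`, and
comparing two factorizations of a constant sequence shows that `M` is left-cancellative.
-/

def IsCountablePowerOfOne {M P : Type} [Monoid M] (π : ℕ → P → Option (M × PUnit)) : Prop :=
  ∀ (X : Type) (f : ℕ → X → Option (M × PUnit)),
    ∃! h : X → Option (M × P), ∀ n, KlComp (π n) h = f n

def Represents {M P : Type} [Monoid M] (π : ℕ → P → Option (M × PUnit))
    (g : ℕ → M) (c : M) (p : P) : Prop :=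
  ∀ n, ∃ t : M, π n p = some (t, PUnit.unit) ∧ c * t = g n

section CountablePower

variable {M P : Type} [Monoid M] {π : ℕ → P → Option (M × PUnit)}

theorem klComp_const_eq_const_iff {ρ : P → Option (M × PUnit)} {c g : M} {p : P} :
    KlComp ρ (fun _ : PUnit => some (c, p)) = (fun _ => some (g, PUnit.unit)) ↔
      ∃ t : M, ρ p = some (t, PUnit.unit) ∧ c * t = g := by
  constructor
  · intro h
    have h' := congrFun h PUnit.unit
    simp only [KlComp, Option.bind_some] at h'
    obtain ⟨⟨t, u⟩, hp, heq⟩ := Option.map_eq_some_iff.mp h'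
    exact ⟨t, hp, congrArg Prod.fst heq⟩
  · rintro ⟨t, hp, rfl⟩
    funext
    simp [KlComp, hp]

theorem represents_iff {g : ℕ → M} {c : M} {p : P} :
    Represents π g c p ↔
      ∀ n, KlComp (π n) (fun _ : PUnit => some (c, p)) = fun _ => some (g n, PUnit.unit) := by
  simp only [Represents, klComp_const_eq_const_iff]

theorem Represents.mul_left {g : ℕ → M} {c : M} {p : P} (h : Represents π g c p) (u : M) :
    Represents π (fun n => u * g n) (u * c) p := fun n =>
  let ⟨t, hp, hct⟩ := h n
  ⟨t, hp, by rw [mul_assoc, hct]⟩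

namespace IsCountablePowerOfOne

variable (H : IsCountablePowerOfOne π)
include H

theorem exists_represents (g : ℕ → M) : ∃ c p, Represents π g c p := by
  obtain ⟨h, hh, -⟩ := H PUnit fun n _ => some (g n, PUnit.unit)
  cases hx : h PUnit.unit with
  | none =>
    have h0 := congrFun (hh 0) PUnit.unit
    simp [KlComp, hx] at h0
  | some cp =>
    have hconst : h = fun _ => some (cp.1, cp.2) := funext fun _ => hx
    exact ⟨cp.1, cp.2, represents_iff.mpr fun n => hconst ▸ hh n⟩

theorem represents_unique {g : ℕ → M} {c c' : M} {p p' : P}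
    (h : Represents π g c p) (h' : Represents π g c' p') : c = c' ∧ p = p' := by
  obtain ⟨_, -, huniq⟩ := H PUnit fun n _ => some (g n, PUnit.unit)
  have := congrFun ((huniq _ (represents_iff.mp h)).trans (huniq _ (represents_iff.mp h')).symm)
    PUnit.unit
  simpa using this

theorem mul_left_eq_of_represents {g : ℕ → M} {d : M} {p : P} (h : Represents π g d p)
    {u v : M} (huv : ∀ n, u * g n = v * g n) : u * d = v * d := by
  have hv : Represents π (fun n => u * g n) (v * d) p := by simpa only [huv] using h.mul_left v
  exact (H.represents_unique (h.mul_left u) hv).1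

/-- The constant sequence `w * a` is represented both by `(w * c, p)`, where `(c, p)` represents
`a, b, b, …`, and by `(w * a * e, q)`, where `(e, q)` represents `1, 1, …`. Hence `p = q`, so the
coordinates of `p` are all `e⁻¹`, and `a = c * e⁻¹ = b`. -/
theorem isLeftCancelMul (hr : ∀ x : M, (∃ y : M, x * y = 1) → IsUnit x) :
    IsLeftCancelMul M := by
  refine ⟨fun w a b (hab : w * a = w * b) => ?_⟩
  obtain ⟨c, p, hcp⟩ := H.exists_represents fun n => if n = 0 then a else b
  obtain ⟨e, q, heq⟩ := H.exists_represents fun _ => 1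
  have hpq : p = q := by
    have hwa : Represents π (fun _ => w * a) (w * a * e) q := by
      simpa using heq.mul_left (w * a)
    have hwc : Represents π (fun _ => w * a) (w * c) p := by
      convert hcp.mul_left w using 2 with n
      split_ifs <;> simp [hab]
    exact (H.represents_unique hwc hwa).2
  subst hpq
  obtain ⟨t₀, -, ht₀⟩ := heq 0
  have he : IsUnit e := hr e ⟨t₀, ht₀⟩
  have hcoord (n : ℕ) : (if n = 0 then a else b) = c * ↑he.unit⁻¹ := by
    obtain ⟨t, ht, hct⟩ := hcp n
    obtain ⟨t', ht', het'⟩ := heq n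
    simp only at hct het'
    obtain rfl : t = t' := by simpa [ht] using ht'
    rw [← hct, he.unit.eq_inv_of_mul_eq_one_left het']
  simpa using (hcoord 0).trans (hcoord 1).symm

theorem isLeftGcd_of_represents {I : Type} {w : I → M} {e : ℕ → I}
    (he : Function.Surjective e) {d : M} {q : P} (h : Represents π (w ∘ e) d q) :
    IsLeftGcd d w := by
  refine ⟨?_, fun d' ⟨v, hv⟩ => ?_⟩
  · choose t _ ht using h
    exact ⟨fun i => t (he i).choose, fun i => by rw [ht, Function.comp_apply, (he i).choose_spec]⟩
  · obtain ⟨ε, q', hεq'⟩ := H.exists_represents (v ∘ e)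
    have hd' : Represents π (fun n => w (e n)) (d' * ε) q' := by
      simpa [← mul_assoc, hv] using hεq'.mul_left d'
    exact ⟨ε, (H.represents_unique hd' h).1⟩

theorem exists_represents_isLeftGcd (I : Type) [Countable I] [Nonempty I] (w : I → M) :
    ∃ (e : ℕ → I) (d : M) (q : P), Represents π (w ∘ e) d q ∧ IsLeftGcd d w := by
  obtain ⟨e, he⟩ := exists_surjective_nat I
  obtain ⟨d, q, hdq⟩ := H.exists_represents (w ∘ e)
  exact ⟨e, d, q, hdq, H.isLeftGcd_of_represents he hdq⟩

theorem exists_isLeftGcd (I : Type) [Countable I] [Nonempty I] (w : I → M) :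
    ∃ δ : M, IsLeftGcd δ w :=
  let ⟨_, d, _, _, hd⟩ := H.exists_represents_isLeftGcd I w
  ⟨d, hd⟩

theorem rightCoprimeCancellative (hr : ∀ x : M, (∃ y : M, x * y = 1) → IsUnit x) :
    RightCoprimeCancellative M := by
  intro I _ _ u v w hcop huv
  obtain ⟨e, d, q, hdq, hd⟩ := H.exists_represents_isLeftGcd I w
  obtain ⟨y, hy⟩ := hcop d hd.1
  exact (hr d ⟨y, hy⟩).mul_right_cancel (H.mul_left_eq_of_represents hdq fun n => huv (e n))

end IsCountablePowerOfOne

end CountablePower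

theorem leftCancellativeUpToInv_of_isLeftCancelMul (M : Type) [Monoid M] [IsLeftCancelMul M] :
    LeftCancellativeUpToInv M :=
  fun _ _ _ _ _ _ h => ⟨1, fun i => by simpa using mul_left_cancel (h i)⟩

theorem IsLeftGcd.exists_unit_mul_eq {M I : Type} [Monoid M] [IsLeftCancelMul M]
    (hr : ∀ x : M, (∃ y : M, x * y = 1) → IsUnit x) {w : I → M} {δ δ' : M}
    (h : IsLeftGcd δ w) (h' : IsLeftGcd δ' w) : ∃ χ : Mˣ, δ' = δ * ↑χ := by
  obtain ⟨c, hc⟩ := h'.2 δ h.1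
  obtain ⟨c', hc'⟩ := h.2 δ' h'.1
  have hcc' : c * c' = 1 := mul_left_cancel (a := δ) (by rw [← mul_assoc, hc, hc', mul_one])
  exact ⟨(hr c ⟨c', hcc'⟩).unit, hc.symm⟩

theorem monoid_properties_of_countable_powers_general (M : Type) [Monoid M]
    (hr : ∀ x : M, (∃ y : M, x * y = 1) → IsUnit x)
    (hpow : HasCountablePowersOfOne M) :
    LeftCancellativeUpToInv M ∧
    RightCoprimeCancellative M ∧
    (∀ (I : Type) [Countable I] [Nonempty I] (w : I → M),
      (∃ δ : M, IsLeftGcd δ w) ∧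
      (∀ δ δ' : M, IsLeftGcd δ w → IsLeftGcd δ' w →
        ∃ χ : Mˣ, δ' = δ * ↑χ)) := by
  obtain ⟨P, π, (H : IsCountablePowerOfOne π)⟩ := hpow
  have := H.isLeftCancelMul hr
  exact ⟨leftCancellativeUpToInv_of_isLeftCancelMul M, H.rightCoprimeCancellative hr,
    fun I _ _ w => ⟨H.exists_isLeftGcd I w, fun _ _ => IsLeftGcd.exists_unit_mul_eq hr⟩⟩

theorem monoid_properties_of_countable_powers (M : Type) [Monoid M]
    (hr : ∀ x : M, (∃ y : M, x * y = 1) → IsUnit x)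
    (hl : ∀ x : M, (∃ y : M, y * x = 1) → IsUnit x)
    (hpow : HasCountablePowersOfOne M) :
    LeftCancellativeUpToInv M ∧
    RightCoprimeCancellative M ∧
    (∀ (I : Type) [Countable I] [Nonempty I] (w : I → M),
      (∃ δ : M, IsLeftGcd δ w) ∧
      (∀ δ δ' : M, IsLeftGcd δ w → IsLeftGcd δ' w →
        ∃ χ : Mˣ, δ' = δ * ↑χ)) :=
  monoid_properties_of_countable_powers_general M hr hpow
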